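/- For all x > 0, the function L(x) = 2Φ(x)² − 3x·Φ(x)·φ(x) − 2φ(x)² is strictly positive; in particular L(0) = 1/2 − 1/π > 0 and L'(x) = Φ(x)φ(x) + 3x²Φ(x)φ(x) + xφ(x)² > 0 for x ≥ 0. -/

import Mathlib

/-!
With `Φ' = φ` and `φ' = -xφ`, differentiating `L` gives `L' = (1 + 3x²)Φφ + xφ²`, which is positive
for `x ≥ 0`, so `L` is strictly increasing on `[0, ∞)`. At the origin `Φ(0) = 1/2` by symmetry of `φ`
and `φ(0)² = 1/(2π)`, so `L(0) = 1/2 - 1/π`, which is positive because `π > 2`.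
-/

open MeasureTheory ProbabilityTheory Real

noncomputable def stdPDF (u : ℝ) : ℝ := (Real.sqrt (2 * Real.pi))⁻¹ * Real.exp (-u ^ 2 / 2)

noncomputable def stdCDF (u : ℝ) : ℝ := ∫ t in Set.Iic u, stdPDF t

noncomputable def L (x : ℝ) : ℝ :=
  2 * (stdCDF x) ^ 2 - 3 * x * stdCDF x * stdPDF x - 2 * (stdPDF x) ^ 2

lemma stdPDF_eq_gaussianPDFReal : stdPDF = gaussianPDFReal 0 1 := by
  ext u
  simp [stdPDF, gaussianPDFReal]

lemma stdPDF_pos (u : ℝ) : 0 < stdPDF u :=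
  stdPDF_eq_gaussianPDFReal ▸ gaussianPDFReal_pos 0 1 u one_ne_zero

lemma stdPDF_neg (u : ℝ) : stdPDF (-u) = stdPDF u := by
  simp [stdPDF]

lemma sq_stdPDF_zero : stdPDF 0 ^ 2 = (2 * π)⁻¹ := by
  rw [stdPDF, mul_pow, inv_pow, sq_sqrt (by positivity)]
  simp

lemma continuous_stdPDF : Continuous stdPDF := by
  unfold stdPDF
  fun_prop

lemma integrable_stdPDF : Integrable stdPDF :=
  stdPDF_eq_gaussianPDFReal ▸ integrable_gaussianPDFReal 0 1

lemma integral_stdPDF : ∫ u, stdPDF u = 1 :=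
  stdPDF_eq_gaussianPDFReal ▸ integral_gaussianPDFReal_eq_one 0 one_ne_zero

lemma hasDerivAt_stdPDF (x : ℝ) : HasDerivAt stdPDF (-x * stdPDF x) x := by
  have hexp : HasDerivAt (fun u : ℝ => -u ^ 2 / 2) (-x) x := by
    simpa using ((hasDerivAt_pow 2 x).neg.div_const 2).congr_deriv (by ring)
  refine (hexp.exp.const_mul (√(2 * π))⁻¹).congr_deriv ?_
  simp only [stdPDF]
  ring

lemma stdCDF_eq_add_intervalIntegral (x : ℝ) :
    stdCDF x = stdCDF 0 + ∫ t in (0 : ℝ)..x, stdPDF t := by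
  rw [← intervalIntegral.integral_Iic_sub_Iic integrable_stdPDF.integrableOn
    integrable_stdPDF.integrableOn]
  unfold stdCDF
  ring

lemma hasDerivAt_stdCDF (x : ℝ) : HasDerivAt stdCDF (stdPDF x) x := by
  rw [funext stdCDF_eq_add_intervalIntegral]
  exact (intervalIntegral.integral_hasDerivAt_right (continuous_stdPDF.intervalIntegrable 0 x)
    (continuous_stdPDF.stronglyMeasurableAtFilter _ _) continuous_stdPDF.continuousAt).const_add _

lemma stdCDF_pos (x : ℝ) : 0 < stdCDF x := by
  have hsupp : Function.support stdPDF = Set.univ :=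
    Set.eq_univ_of_forall fun t => (stdPDF_pos t).ne'
  rw [stdCDF, setIntegral_pos_iff_support_of_nonneg_ae
    (Filter.Eventually.of_forall fun t => (stdPDF_pos t).le) integrable_stdPDF.integrableOn,
    hsupp, Set.univ_inter, Real.volume_Iic]
  exact ENNReal.zero_lt_top

lemma stdCDF_zero : stdCDF 0 = 1 / 2 := by
  have hsymm : ∫ t in Set.Ioi (0 : ℝ), stdPDF t = stdCDF 0 := by
    rw [stdCDF, ← neg_zero, ← integral_comp_neg_Ioi]
    simp only [stdPDF_neg, neg_zero]
  have htotal : stdCDF 0 + ∫ t in Set.Ioi (0 : ℝ), stdPDF t = 1 := by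
    rw [stdCDF, ← setIntegral_union (Set.Iic_disjoint_Ioi le_rfl) measurableSet_Ioi
      integrable_stdPDF.integrableOn integrable_stdPDF.integrableOn,
      Set.Iic_union_Ioi, Measure.restrict_univ, integral_stdPDF]
  linarith

lemma L_zero : L 0 = 1 / 2 - 1 / π := by
  rw [L, stdCDF_zero, sq_stdPDF_zero]
  field_simp
  ring

lemma L_zero_pos : 0 < L 0 := by
  rw [L_zero, sub_pos, one_div_lt_one_div pi_pos two_pos]
  linarith [pi_gt_three]

lemma hasDerivAt_L (x : ℝ) :
    HasDerivAt L (stdCDF x * stdPDF x + 3 * x ^ 2 * stdCDF x * stdPDF x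
      + x * (stdPDF x) ^ 2) x := by
  have hΦ := hasDerivAt_stdCDF x
  have hφ := hasDerivAt_stdPDF x
  refine ((((hΦ.pow 2).const_mul 2).sub ((((hasDerivAt_id x).const_mul 3).mul hΦ).mul hφ)).sub
    ((hφ.pow 2).const_mul 2)).congr_deriv ?_
  simp only [id_eq, Pi.mul_apply, Nat.cast_ofNat]
  ring

lemma deriv_L_pos {x : ℝ} (hx : 0 ≤ x) : 0 < deriv L x := by
  rw [(hasDerivAt_L x).deriv]
  have hΦφ : 0 < stdCDF x * stdPDF x := mul_pos (stdCDF_pos x) (stdPDF_pos x)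
  have : 0 ≤ 3 * x ^ 2 * stdCDF x * stdPDF x := by rw [mul_assoc]; positivity
  positivity

lemma strictMonoOn_L : StrictMonoOn L (Set.Ici 0) := by
  refine strictMonoOn_of_deriv_pos (convex_Ici 0)
    (fun y _ => (hasDerivAt_L y).continuousAt.continuousWithinAt) fun y hy => ?_
  rw [interior_Ici] at hy
  exact deriv_L_pos hy.le

/-- `L(x) > 0` for `x > 0`; `L(0) = 1/2 - 1/π > 0`; and
`L'(x) = Φ(x)φ(x) + 3x²Φ(x)φ(x) + xφ(x)² > 0` for `x ≥ 0`. -/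
theorem L_pos :
    (L 0 = 1 / 2 - 1 / Real.pi ∧ 0 < L 0) ∧
      (∀ x : ℝ, 0 ≤ x →
        deriv L x = stdCDF x * stdPDF x + 3 * x ^ 2 * stdCDF x * stdPDF x + x * (stdPDF x) ^ 2 ∧
          0 < deriv L x) ∧
      ∀ x : ℝ, 0 < x → 0 < L x := by
  refine ⟨⟨L_zero, L_zero_pos⟩, fun x hx => ?_, fun x hx => ?_⟩
  · exact ⟨(hasDerivAt_L x).deriv, deriv_L_pos hx⟩
  · exact L_zero_pos.trans (strictMonoOn_L Set.self_mem_Ici (Set.mem_Ici.mpr hx.le) hx)
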